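/- arXiv:1612.04571 — 3 statements merged into one kernel-verified Lean document; each statement's English description precedes it below -/
import Mathlib

section
/- Let x_0, x_1, …, x_n ∈ ℝ^d with n ≥ 1, let r > 0, β > 0, α ≥ 1 and p ∈ (0,1). Let N_β = |{(i,j) : 1 ≤ i < j ≤ n, ‖x_i − x_j‖₂ ≤ βr}|, set M = (1 + 2√2·α/β)^{d/2} · √(2N_β + n), and choose the real parameter K = (1/α²) · log M / log(1/p). Then p^{−K} · (1 + Σ_{i : ‖x_i − x_0‖₂ ≥ αr} p^{K·‖x_i − x_0‖₂² / r²}) ≤ 3 · (1 + 2√2·α/β)^{d/(2α²)} · (2N_β + n)^{1/(2α²)}. -/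
/-!
Choosing `K` makes `p ^ K = M ^ (-1/α²)`, so both sides carry the factor `M ^ (1/α²)` and it
remains to show `∑_{far i} M ^ (-eᵢ) ≤ 2`, where `eᵢ = (‖xᵢ - x₀‖ / (αr))² ≥ 1`.
Sort the far points into the shells `eᵢ ∈ [m + 1, m + 2)`. A volume argument (Cauchy–Schwarz for
`∑ᵢ 𝟙_{B(xᵢ, βr/2)}`, supported in a ball around `x₀`) bounds the square of the number of points
within distance `R` of `x₀` by `(1 + 2R/(βr))^d` times the number of ordered `βr`-near pairs,
which is at most `2N_β + n`. By Bernoulli's inequality the `m`-th shell then contains at most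
`M^(m+1) / √(2N_β + n)^m` points, so it contributes at most `2^(-m)` once `2N_β + n ≥ 4`;
when `2N_β + n < 4` every term is at most `1/√(2N_β + n)` and there are at most `2N_β + n` of them.
-/

open MeasureTheory Metric Finset
open scoped ENNReal

theorem sq_setLIntegral_le_measure_mul {α : Type*} [MeasurableSpace α] (μ : Measure α)
    {f : α → ℝ≥0∞} (hf : AEMeasurable f μ) (s : Set α) :
    (∫⁻ a in s, f a ∂μ) ^ 2 ≤ μ s * ∫⁻ a in s, f a ^ 2 ∂μ := by
  have holder := ENNReal.lintegral_mul_le_Lp_mul_Lq (μ.restrict s) Real.HolderConjugate.two_two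
    hf.restrict (aemeasurable_const (b := (1 : ℝ≥0∞)))
  simp only [Pi.mul_apply, mul_one, ENNReal.one_rpow, lintegral_const, Measure.restrict_apply_univ,
    one_mul] at holder
  calc (∫⁻ a in s, f a ∂μ) ^ 2
      ≤ ((∫⁻ a in s, f a ^ (2 : ℝ) ∂μ) ^ (1 / 2 : ℝ) * μ s ^ (1 / 2 : ℝ)) ^ 2 := by gcongr
    _ = μ s * ∫⁻ a in s, f a ^ 2 ∂μ := by
      rw [mul_pow, ← ENNReal.rpow_natCast, ← ENNReal.rpow_natCast, ← ENNReal.rpow_mul,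
        ← ENNReal.rpow_mul]
      norm_num [mul_comm]

theorem measure_ball_inter_ball_le {E : Type*} [PseudoMetricSpace E] [MeasurableSpace E]
    (μ : Measure E) (x y : E) (ρ : ℝ) :
    μ (ball x ρ ∩ ball y ρ) ≤ if dist x y ≤ 2 * ρ then μ (ball x ρ) else 0 := by
  split_ifs with h
  · exact measure_mono Set.inter_subset_left
  · rw [(ball_disjoint_ball (by linarith)).inter_eq, measure_empty]

theorem card_filter_le_two_mul_card_filter_lt_add_card {ι : Type*} [Fintype ι] [LinearOrder ι]
    (r : ι → ι → Prop) [DecidableRel r] (hr : ∀ i j, r i j → r j i) :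
    #{q : ι × ι | r q.1 q.2} ≤ 2 * #{q : ι × ι | q.1 < q.2 ∧ r q.1 q.2} + Fintype.card ι := by
  set A : Finset (ι × ι) := {q | q.1 < q.2 ∧ r q.1 q.2}
  set swapA := A.map (Equiv.prodComm ι ι).toEmbedding
  have hsub : ({q : ι × ι | r q.1 q.2} : Finset (ι × ι)) ⊆ A ∪ swapA ∪ univ.diag := by
    rintro ⟨i, j⟩ hij
    simp only [mem_filter, mem_univ, true_and] at hij
    rcases lt_trichotomy i j with h | rfl | h
    · simp [A, h, hij]
    · simp
    · simp [A, swapA, h, hr _ _ hij]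
  calc #{q : ι × ι | r q.1 q.2} ≤ #(A ∪ swapA ∪ univ.diag) := card_le_card hsub
    _ ≤ #A + #A + Fintype.card ι := by
        refine (card_union_le _ _).trans (add_le_add ((card_union_le _ _).trans ?_) ?_) <;>
          simp [swapA]
    _ = _ := by ring

section Packing

variable {E ι : Type*} [NormedAddCommGroup E]

section Measure

variable [MeasurableSpace E] [BorelSpace E] (μ : Measure E) [μ.IsAddHaarMeasure]

theorem lintegral_sum_indicator_ball (s : Finset ι) (x : ι → E) (ρ : ℝ) :
    ∫⁻ z, ∑ i ∈ s, (ball (x i) ρ).indicator 1 z ∂μ = #s * μ (ball 0 ρ) := by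
  rw [lintegral_finsetSum _ fun i _ => measurable_one.indicator measurableSet_ball]
  simp [lintegral_indicator_one measurableSet_ball, Measure.addHaar_ball_center]

theorem lintegral_sq_sum_indicator_ball_le (s : Finset ι) (x : ι → E) (ρ : ℝ) :
    ∫⁻ z, (∑ i ∈ s, (ball (x i) ρ).indicator 1 z) ^ 2 ∂μ ≤
      #{q ∈ s ×ˢ s | dist (x q.1) (x q.2) ≤ 2 * ρ} * μ (ball 0 ρ) := by
  have hinter : ∀ i j, MeasurableSet (ball (x i) ρ ∩ ball (x j) ρ) := fun i j =>
    measurableSet_ball.inter measurableSet_ball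
  have hsq : ∀ z, (∑ i ∈ s, (ball (x i) ρ).indicator (1 : E → ℝ≥0∞) z) ^ 2 =
      ∑ i ∈ s, ∑ j ∈ s, (ball (x i) ρ ∩ ball (x j) ρ).indicator 1 z := by
    intro z
    simp only [sq, sum_mul_sum, Set.inter_indicator_one]
    rfl
  calc ∫⁻ z, (∑ i ∈ s, (ball (x i) ρ).indicator 1 z) ^ 2 ∂μ
      = ∑ i ∈ s, ∑ j ∈ s, μ (ball (x i) ρ ∩ ball (x j) ρ) := by
        simp_rw [hsq]
        rw [lintegral_finsetSum _ fun i _ => Finset.measurable_sum _ fun j _ =>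
          measurable_one.indicator (hinter i j)]
        refine sum_congr rfl fun i _ => ?_
        rw [lintegral_finsetSum _ fun j _ => measurable_one.indicator (hinter i j)]
        simp [lintegral_indicator_one (hinter _ _)]
    _ ≤ ∑ i ∈ s, ∑ j ∈ s, if dist (x i) (x j) ≤ 2 * ρ then μ (ball 0 ρ) else 0 := by
        gcongr with i _ j _
        simpa [Measure.addHaar_ball_center] using measure_ball_inter_ball_le μ (x i) (x j) ρ
    _ = #{q ∈ s ×ˢ s | dist (x q.1) (x q.2) ≤ 2 * ρ} * μ (ball 0 ρ) := by
        rw [← sum_product', ← sum_filter, sum_const, nsmul_eq_mul]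

end Measure

variable [NormedSpace ℝ E] [FiniteDimensional ℝ E] [Fintype ι]

theorem card_sq_mul_measure_ball_le [MeasurableSpace E] [BorelSpace E] (μ : Measure E)
    [μ.IsAddHaarMeasure] (x₀ : E) (x : ι → E) (R ρ : ℝ) :
    (#{i | dist (x i) x₀ ≤ R} : ℝ≥0∞) ^ 2 * μ (ball 0 ρ) ≤
      #{q : ι × ι | dist (x q.1) (x q.2) ≤ 2 * ρ} * μ (ball x₀ (R + ρ)) := by
  set F : Finset ι := {i | dist (x i) x₀ ≤ R}
  set V := μ (ball (0 : E) ρ)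
  set f : E → ℝ≥0∞ := fun z => ∑ i ∈ F, (ball (x i) ρ).indicator 1 z
  have hf : Measurable f :=
    Finset.measurable_sum _ fun i _ => measurable_one.indicator measurableSet_ball
  have hsupp : f.support ⊆ ball x₀ (R + ρ) := by
    intro z hz
    obtain ⟨i, hi, hz⟩ := Finset.exists_ne_zero_of_sum_ne_zero hz
    have hzi : dist z (x i) < ρ := by
      by_contra h
      exact hz (Set.indicator_of_notMem (by simpa using h) _)
    have hi : dist (x i) x₀ ≤ R := (mem_filter.mp hi).2
    exact mem_ball.mpr ((dist_triangle z (x i) x₀).trans_lt (by linarith))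
  have hcs : ((#F : ℝ≥0∞) * V) ^ 2 ≤
      μ (ball x₀ (R + ρ)) * (#{q : ι × ι | dist (x q.1) (x q.2) ≤ 2 * ρ} * V) :=
    calc ((#F : ℝ≥0∞) * V) ^ 2 = (∫⁻ z in ball x₀ (R + ρ), f z ∂μ) ^ 2 := by
          rw [setLIntegral_eq_of_support_subset hsupp, lintegral_sum_indicator_ball]
      _ ≤ μ (ball x₀ (R + ρ)) * ∫⁻ z in ball x₀ (R + ρ), f z ^ 2 ∂μ :=
          sq_setLIntegral_le_measure_mul μ hf.aemeasurable _
      _ ≤ μ (ball x₀ (R + ρ)) * (#{q ∈ F ×ˢ F | dist (x q.1) (x q.2) ≤ 2 * ρ} * V) := by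
          grw [setLIntegral_le_lintegral, lintegral_sq_sum_indicator_ball_le]
      _ ≤ _ := by gcongr; exact subset_univ _
  rcases eq_or_ne V 0 with hV0 | hV0
  · simp [V, hV0]
  rw [← ENNReal.mul_le_mul_iff_left hV0 measure_ball_lt_top.ne]
  calc (#F : ℝ≥0∞) ^ 2 * V * V = ((#F : ℝ≥0∞) * V) ^ 2 := by ring
    _ ≤ _ := hcs
    _ = _ := by ring

theorem card_sq_le_pow_mul_card (x₀ : E) (x : ι → E) {R ρ : ℝ} (hR : 0 ≤ R) (hρ : 0 < ρ) :
    (#{i | dist (x i) x₀ ≤ R} : ℝ) ^ 2 ≤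
      ((R + ρ) / ρ) ^ Module.finrank ℝ E * #{q : ι × ι | dist (x q.1) (x q.2) ≤ 2 * ρ} := by
  let _ : MeasurableSpace E := borel E
  have _ : BorelSpace E := ⟨rfl⟩
  have h := card_sq_mul_measure_ball_le Measure.addHaar x₀ x R ρ
  have hball : Measure.addHaar (ball x₀ (R + ρ)) =
      ENNReal.ofReal (((R + ρ) / ρ) ^ Module.finrank ℝ E) * Measure.addHaar (ball (0 : E) ρ) := by
    rw [← Measure.addHaar_ball_mul_of_pos _ x₀ (by positivity), div_mul_cancel₀ _ hρ.ne']
  rw [hball, ← mul_assoc, ENNReal.mul_le_mul_iff_left (measure_ball_pos _ _ hρ).ne'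
    measure_ball_lt_top.ne] at h
  rw [← ENNReal.ofReal_le_ofReal_iff (by positivity), ENNReal.ofReal_mul (by positivity),
    ENNReal.ofReal_pow (Nat.cast_nonneg _), ENNReal.ofReal_natCast, ENNReal.ofReal_natCast,
    mul_comm]
  exact h

theorem sqrt_add_two_le_sqrt_two_mul (m : ℕ) : √(m + 2 : ℝ) ≤ √2 * (m + 1) := by
  rw [← Real.sqrt_sq (by positivity : (0 : ℝ) ≤ m + 1), ← Real.sqrt_mul zero_le_two]
  exact Real.sqrt_le_sqrt (by nlinarith)

theorem card_dist_lt_le_pow_mul_sqrt [LinearOrder ι] (x₀ : E) (x : ι → E) {r β α : ℝ} (hr : 0 < r)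
    (hβ : 0 < β) (hα : 0 < α) (m : ℕ) :
    (#{i | dist (x i) x₀ < α * r * √(m + 2)} : ℝ) ≤
      ((1 + 2 * √2 * α / β) ^ ((Module.finrank ℝ E : ℝ) / 2)) ^ (m + 1) *
        √(2 * #{q : ι × ι | q.1 < q.2 ∧ dist (x q.1) (x q.2) ≤ β * r} + Fintype.card ι) := by
  set c := 2 * √2 * α / β
  set D := Module.finrank ℝ E
  set W : ℝ := 2 * #{q : ι × ι | q.1 < q.2 ∧ dist (x q.1) (x q.2) ≤ β * r} + Fintype.card ι
  have hc : 0 ≤ c := by positivity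
  have hpairs : (#{q : ι × ι | dist (x q.1) (x q.2) ≤ 2 * (β * r / 2)} : ℝ) ≤ W := by
    rw [mul_div_cancel₀ _ two_ne_zero]
    simp only [W]
    exact_mod_cast card_filter_le_two_mul_card_filter_lt_add_card
      (fun i j => dist (x i) (x j) ≤ β * r) fun i j h => by rwa [dist_comm]
  have hbase : (α * r * √(m + 2) + β * r / 2) / (β * r / 2) ≤ (1 + c) ^ (m + 1) :=
    calc (α * r * √(m + 2) + β * r / 2) / (β * r / 2) = 1 + 2 * α / β * √(m + 2) := by
          field_simp
          ring
      _ ≤ 1 + (m + 1 : ℕ) * c := by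
          have := sqrt_add_two_le_sqrt_two_mul m
          push_cast
          rw [show (m + 1 : ℝ) * c = 2 * α / β * (√2 * (m + 1)) by ring]
          gcongr
      _ ≤ (1 + c) ^ (m + 1) := one_add_mul_le_pow (by linarith) _
  have hnear : (#{i | dist (x i) x₀ < α * r * √(m + 2)} : ℝ) ^ 2 ≤ ((1 + c) ^ (m + 1)) ^ D * W :=
    calc (#{i | dist (x i) x₀ < α * r * √(m + 2)} : ℝ) ^ 2
        ≤ (#{i | dist (x i) x₀ ≤ α * r * √(m + 2)} : ℝ) ^ 2 := by
          gcongr with i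
          exact le_of_lt
      _ ≤ _ := card_sq_le_pow_mul_card x₀ x (by positivity) (by positivity : 0 < β * r / 2)
      _ ≤ ((1 + c) ^ (m + 1)) ^ D * W := by gcongr
  have hsq : ((1 + c) ^ ((D : ℝ) / 2)) ^ 2 = (1 + c) ^ D := by
    rw [← Real.rpow_natCast _ 2, ← Real.rpow_mul (by positivity), ← Real.rpow_natCast]
    norm_num
  rw [← pow_le_pow_iff_left₀ (by positivity) (by positivity) two_ne_zero, mul_pow, ← pow_mul,
    mul_comm (m + 1), pow_mul, hsq, Real.sq_sqrt (by positivity), pow_right_comm]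
  exact hnear

end Packing

section TailSum

variable {ι : Type*} (s : Finset ι) (e : ι → ℝ)

theorem sum_rpow_neg_le_sqrt {M W : ℝ} (hW : 1 ≤ W) (hM : √W ≤ M) (hs : #s ≤ W)
    (he : ∀ i ∈ s, 1 ≤ e i) : ∑ i ∈ s, M ^ (-e i) ≤ √W := by
  have hW0 : 0 < √W := Real.sqrt_pos.mpr (by linarith)
  have hM1 : 1 ≤ M := (Real.one_le_sqrt.mpr hW).trans hM
  calc ∑ i ∈ s, M ^ (-e i) ≤ ∑ _i ∈ s, (√W)⁻¹ := by
        refine sum_le_sum fun i hi => ?_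
        calc M ^ (-e i) ≤ M ^ (-1 : ℝ) :=
              Real.rpow_le_rpow_of_exponent_le hM1 (by linarith [he i hi])
          _ = M⁻¹ := Real.rpow_neg_one M
          _ ≤ (√W)⁻¹ := inv_anti₀ hW0 hM
    _ = #s * (√W)⁻¹ := by rw [sum_const, nsmul_eq_mul]
    _ ≤ W * (√W)⁻¹ := by gcongr
    _ = √W := by rw [← div_eq_mul_inv, Real.div_sqrt]

theorem sum_rpow_neg_le_two_of_four_le {B W : ℝ} (hB : 1 ≤ B) (hW : 4 ≤ W)
    (he : ∀ i ∈ s, 1 ≤ e i)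
    (hcount : ∀ m : ℕ, (#{i ∈ s | e i < m + 2} : ℝ) ≤ B ^ (m + 1) * √W) :
    ∑ i ∈ s, (B * √W) ^ (-e i) ≤ 2 := by
  have hsW : 2 ≤ √W := Real.le_sqrt_of_sq_le (by linarith)
  set M := B * √W
  have hM1 : 1 ≤ M := one_le_mul_of_one_le_of_one_le hB (by linarith)
  set shell : ι → ℕ := fun i => ⌊e i⌋₊ - 1
  rw [← sum_fiberwise_of_maps_to (g := shell) (t := range (s.sup shell + 1))
    fun i hi => mem_range.mpr (Nat.lt_succ_of_le (le_sup hi))]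
  refine (sum_le_sum fun m _ => ?_).trans (sum_geometric_two_le _)
  have hshell : ∀ i ∈ {i ∈ s | shell i = m}, (m + 1 : ℝ) ≤ e i ∧ e i < m + 2 := by
    intro i hi
    obtain ⟨hi, hmi⟩ := mem_filter.mp hi
    have hfloor : ⌊e i⌋₊ = m + 1 := by
      have := Nat.one_le_floor_iff (e i) |>.mpr (he i hi)
      have : ⌊e i⌋₊ - 1 = m := hmi
      omega
    constructor
    · exact_mod_cast hfloor ▸ Nat.floor_le (by linarith [he i hi])
    · exact_mod_cast hfloor ▸ Nat.lt_floor_add_one (e i)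
  calc ∑ i ∈ s with shell i = m, M ^ (-e i)
      ≤ ∑ i ∈ s with shell i = m, (M ^ (m + 1))⁻¹ := by
        refine sum_le_sum fun i hi => ?_
        rw [← Real.rpow_natCast, ← Real.rpow_neg (by linarith)]
        exact Real.rpow_le_rpow_of_exponent_le hM1 (by push_cast; linarith [hshell i hi])
    _ = #{i ∈ s | shell i = m} * (M ^ (m + 1))⁻¹ := by rw [sum_const, nsmul_eq_mul]
    _ ≤ B ^ (m + 1) * √W * (M ^ (m + 1))⁻¹ := by
        gcongr
        refine le_trans ?_ (hcount m)
        exact_mod_cast card_le_card fun i hi =>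
          mem_filter.mpr ⟨(mem_filter.mp hi).1, (hshell i hi).2⟩
    _ = (√W ^ m)⁻¹ := by
        have : 0 < B := by linarith
        have : 0 < √W := by linarith
        simp only [M, mul_pow]
        field_simp
        ring
    _ ≤ (1 / 2) ^ m := by
        rw [one_div, inv_pow]
        gcongr

theorem sum_rpow_neg_le_two {B W : ℝ} (hB : 1 ≤ B) (hW : 1 ≤ W) (hs : #s ≤ W)
    (he : ∀ i ∈ s, 1 ≤ e i)
    (hcount : ∀ m : ℕ, (#{i ∈ s | e i < m + 2} : ℝ) ≤ B ^ (m + 1) * √W) :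
    ∑ i ∈ s, (B * √W) ^ (-e i) ≤ 2 := by
  rcases le_total W 4 with hW4 | hW4
  · refine (sum_rpow_neg_le_sqrt s e hW (le_mul_of_one_le_left (Real.sqrt_nonneg _) hB) hs
      he).trans ?_
    exact Real.sqrt_le_iff.mpr ⟨zero_le_two, by linarith⟩
  · exact sum_rpow_neg_le_two_of_four_le s e hB hW4 he hcount

end TailSum

theorem sum_far_rpow_neg_le_two {E ι : Type*} [NormedAddCommGroup E] [NormedSpace ℝ E]
    [FiniteDimensional ℝ E] [Fintype ι] [LinearOrder ι] [Nonempty ι] (x₀ : E) (x : ι → E)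
    {r β α : ℝ} (hr : 0 < r) (hβ : 0 < β) (hα : 0 < α) :
    ∑ i ∈ {i | α * r ≤ dist (x i) x₀},
      ((1 + 2 * √2 * α / β) ^ ((Module.finrank ℝ E : ℝ) / 2) *
        √(2 * #{q : ι × ι | q.1 < q.2 ∧ dist (x q.1) (x q.2) ≤ β * r} + Fintype.card ι)) ^
          (-(dist (x i) x₀ / (α * r)) ^ 2) ≤ 2 := by
  have hcard : (1 : ℝ) ≤ Fintype.card ι := Nat.one_le_cast.mpr Fintype.card_pos
  have hW : (Fintype.card ι : ℝ) ≤
      2 * #{q : ι × ι | q.1 < q.2 ∧ dist (x q.1) (x q.2) ≤ β * r} + Fintype.card ι :=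
    le_add_of_nonneg_left (by positivity)
  refine sum_rpow_neg_le_two _ _ ?_ (hcard.trans hW) ((Nat.mono_cast (card_le_univ _)).trans hW)
    ?_ fun m => ?_
  · exact Real.one_le_rpow (by linarith [show 0 ≤ 2 * √2 * α / β by positivity]) (by positivity)
  · exact fun i hi => one_le_pow₀ ((one_le_div (by positivity)).mpr (mem_filter.mp hi).2)
  · refine le_trans (Nat.mono_cast (card_le_card fun i hi => mem_filter.mpr ⟨mem_univ _, ?_⟩))
      (card_dist_lt_le_pow_mul_sqrt x₀ x hr hβ hα m)
    have := (Real.lt_sqrt (by positivity)).mpr (mem_filter.mp hi).2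
    rwa [div_lt_iff₀ (by positivity), mul_comm] at this

theorem rpow_log_div_log_one_div_mul {p M : ℝ} (hp : 0 < p) (hp1 : p ≠ 1) (hM : 0 < M) (t : ℝ) :
    p ^ (Real.log M / Real.log (1 / p) * t) = M ^ (-t) := by
  have := Real.log_ne_zero_of_pos_of_ne_one hp hp1
  rw [Real.rpow_def_of_pos hp, Real.rpow_def_of_pos hM, one_div, Real.log_inv]
  field_simp

/-- Proposition 6 (analytic core, ball-grid LSH of Andoni–Indyk, `ρ(s) = 1/s²`):
with `M = (1 + 2√2·α/β)^{d/2} √(2N_β + n)` and `K = (1/α²)·log M / log(1/p)`,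
`p^{-K} (1 + Σ_{i : ‖x_i − x₀‖ ≥ αr} p^{K‖x_i − x₀‖²/r²})
  ≤ 3 (1 + 2√2·α/β)^{d/(2α²)} (2N_β + n)^{1/(2α²)}`. -/
theorem lsh_query_bound_ball_grid {d n : ℕ} (hn : 0 < n)
    (x₀ : EuclideanSpace ℝ (Fin d)) (x : Fin n → EuclideanSpace ℝ (Fin d))
    (r β α p : ℝ) (hr : 0 < r) (hβ : 0 < β) (hα : 1 ≤ α) (hp0 : 0 < p) (hp1 : p < 1)
    (Nβ : ℕ)
    (hNβ : Nβ = (Finset.univ.filter fun ij : Fin n × Fin n =>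
        ij.1 < ij.2 ∧ dist (x ij.1) (x ij.2) ≤ β * r).card)
    (M K : ℝ)
    (hM : M = (1 + 2 * Real.sqrt 2 * α / β) ^ ((d : ℝ) / 2) *
        Real.sqrt (2 * (Nβ : ℝ) + (n : ℝ)))
    (hK : K = (1 / α ^ 2) * Real.log M / Real.log (1 / p)) :
    p ^ (-K) * (1 + ∑ i ∈ Finset.univ.filter fun i : Fin n => α * r ≤ dist (x i) x₀,
        p ^ (K * dist (x i) x₀ ^ 2 / r ^ 2)) ≤
      3 * (1 + 2 * Real.sqrt 2 * α / β) ^ ((d : ℝ) / (2 * α ^ 2)) *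
        (2 * (Nβ : ℝ) + (n : ℝ)) ^ ((1 : ℝ) / (2 * α ^ 2)) := by
  have hα0 : 0 < α := by linarith
  have : Nonempty (Fin n) := ⟨⟨0, hn⟩⟩
  have hsum := sum_far_rpow_neg_le_two x₀ x hr hβ hα0
  rw [finrank_euclideanSpace_fin, Fintype.card_fin, ← hNβ, ← hM] at hsum
  have hM0 : 0 < M := by
    rw [hM]
    exact mul_pos (by positivity) (Real.sqrt_pos.mpr (by positivity))
  have hpow : ∀ t, p ^ (K * t) = M ^ (-(t / α ^ 2)) := fun t => by
    rw [hK, ← rpow_log_div_log_one_div_mul hp0 hp1.ne hM0]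
    ring_nf
  have hterm : ∀ i, p ^ (K * dist (x i) x₀ ^ 2 / r ^ 2) = M ^ (-(dist (x i) x₀ / (α * r)) ^ 2) :=
    fun i => by
      rw [mul_div_assoc, hpow, div_pow, mul_pow]
      field_simp
  calc p ^ (-K) * (1 + ∑ i ∈ {i | α * r ≤ dist (x i) x₀}, p ^ (K * dist (x i) x₀ ^ 2 / r ^ 2))
      = M ^ (1 / α ^ 2) * (1 + ∑ i ∈ {i | α * r ≤ dist (x i) x₀},
          M ^ (-(dist (x i) x₀ / (α * r)) ^ 2)) := by
        rw [← mul_neg_one, hpow, sum_congr rfl fun i _ => hterm i, neg_div, neg_neg]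
    _ ≤ M ^ (1 / α ^ 2) * 3 := by gcongr; linarith
    _ = _ := by
        rw [hM, Real.mul_rpow (by positivity) (by positivity), Real.sqrt_eq_rpow (2 * (Nβ : ℝ) + n),
          ← Real.rpow_mul (by positivity), ← Real.rpow_mul (by positivity)]
        ring_nf
end

section
/- Let x_0, x_1, …, x_n ∈ ℝ^d with n ≥ 1, let β, r > 0, and let N_β = |{(i,j) : 1 ≤ i < j ≤ n, ‖x_i − x_j‖₂ ≤ βr}|. Suppose the finite set {x_0, x_1, …, x_n} (with the Euclidean metric) has doubling dimension at most d_0 + 1, i.e., every subset Y of it can be covered by at most 2^{d_0+1} subsets each of diameter at most half the diameter of Y. Then for every D ≥ 0, |{i : 1 ≤ i ≤ n, ‖x_i − x_0‖₂ ≤ D}| ≤ (1 + 4D/(βr))^{(d_0+1)/2} · √(2N_β + 2n). -/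
/-!
The points within `D` of `x₀` span a set of diameter at most `2D`. Applying the doubling
property `k` times, with `2^k` a power of two between `2D/(βr)` and `1 + 4D/(βr)`, covers
them by at most `(2^k)^(d₀+1)` pieces of diameter at most `βr`. By Cauchy–Schwarz the square
of the number of points is at most the number of pieces times the number of ordered pairs
lying in a common piece, and such pairs are `βr`-near, so there are at most `2N_β + n` of them.
-/

open Finset Metric
open scoped ENNReal

theorem exists_two_pow_mem_Icc {a : ℝ} (ha : 0 ≤ a) :
    ∃ k : ℕ, a ≤ 2 ^ k ∧ (2 : ℝ) ^ k ≤ 1 + 2 * a := by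
  rcases lt_or_ge a 1 with ha1 | ha1
  · exact ⟨0, by norm_num; linarith, by norm_num; linarith⟩
  · obtain ⟨k, hk, hk'⟩ := exists_nat_pow_near ha1 one_lt_two
    exact ⟨k + 1, hk'.le, by rw [pow_succ]; linarith⟩

theorem sq_card_le_card_mul_card_filter_eq {ι κ : Type*} [DecidableEq κ] {S : Finset ι}
    {F : Finset κ} {g : ι → κ} (hg : ∀ i ∈ S, g i ∈ F) :
    #S ^ 2 ≤ #F * #{p ∈ S ×ˢ S | g p.1 = g p.2} := by
  have hS : #S = ∑ s ∈ F, #{i ∈ S | g i = s} := card_eq_sum_card_fiberwise hg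
  have hT : #{p ∈ S ×ˢ S | g p.1 = g p.2} = ∑ s ∈ F, #{i ∈ S | g i = s} ^ 2 := by
    rw [card_eq_sum_card_fiberwise (f := fun p => g p.1) (t := F)]
    · refine sum_congr rfl fun s _ => ?_
      rw [sq, ← card_product, filter_filter]
      congr 1
      ext p
      simp only [mem_filter, mem_product]
      constructor
      · rintro ⟨⟨h1, h2⟩, h3, h4⟩
        exact ⟨⟨h1, h4⟩, h2, h3 ▸ h4⟩
      · rintro ⟨⟨h1, h2⟩, h3, h4⟩
        exact ⟨⟨h1, h3⟩, h2.trans h4.symm, h2⟩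
    · intro p hp
      exact hg p.1 (mem_product.1 (mem_filter.1 hp).1).1
  rw [hS, hT]
  exact sq_sum_le_card_mul_sum_sq

theorem card_filter_le_two_mul_card_filter_lt_add {α : Type*} [Fintype α] [LinearOrder α]
    {R : α → α → Prop} [DecidableRel R] (hR : Std.Symm R) :
    #{p : α × α | R p.1 p.2} ≤ 2 * #{p : α × α | p.1 < p.2 ∧ R p.1 p.2} + Fintype.card α := by
  set A := ({p : α × α | p.1 < p.2 ∧ R p.1 p.2} : Finset _)
  have hsub : ({p : α × α | R p.1 p.2} : Finset _) ⊆ A ∪ A.image Prod.swap ∪ univ.diag := by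
    rintro ⟨i, j⟩ hij
    have hij : R i j := (mem_filter.1 hij).2
    rcases lt_trichotomy i j with h | rfl | h
    · simp [A, h, hij]
    · simp
    · refine mem_union_left _ (mem_union_right _ (mem_image.2 ⟨(j, i), ?_, rfl⟩))
      simp [A, h, hR.symm _ _ hij]
  calc _ ≤ #(A ∪ A.image Prod.swap ∪ univ.diag) := card_le_card hsub
    _ ≤ #A + #(A.image Prod.swap) + #(univ.diag : Finset (α × α)) :=
      (card_union_le _ _).trans (Nat.add_le_add_right (card_union_le _ _) _)
    _ ≤ 2 * #A + Fintype.card α := by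
      rw [diag_card, card_univ]
      have := card_image_le (s := A) (f := Prod.swap)
      omega

theorem le_rpow_half_mul_sqrt_of_sq_le {a A b c : ℝ} {m : ℕ} (ha : 0 ≤ a) (haA : a ≤ A)
    (hc : 0 ≤ c) (h : c ^ 2 ≤ a ^ m * b) : c ≤ A ^ ((m : ℝ) / 2) * √b := by
  calc c = √(c ^ 2) := (Real.sqrt_sq hc).symm
    _ ≤ √(a ^ m * b) := Real.sqrt_le_sqrt h
    _ = a ^ ((m : ℝ) / 2) * √b := by
      rw [Real.sqrt_mul (by positivity), Real.sqrt_eq_rpow, ← Real.rpow_natCast,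
        ← Real.rpow_mul ha, mul_one_div]
    _ ≤ A ^ ((m : ℝ) / 2) * √b := by gcongr

section Doubling

variable {E : Type*} [PseudoEMetricSpace E]

def HasDoublingCovers (A : Set E) (m : ℕ) : Prop :=
  ∀ Y ⊆ A, ∃ f : Fin m → Set E, Y ⊆ ⋃ i, f i ∧ ∀ i, ediam (f i) ≤ ediam Y / 2

theorem HasDoublingCovers.exists_finset_cover {A : Set E} {m : ℕ} (h : HasDoublingCovers A m)
    (k : ℕ) {Y : Set E} (hY : Y ⊆ A) :
    ∃ F : Finset (Set E), #F ≤ m ^ k ∧ Y ⊆ ⋃₀ ↑F ∧ ∀ s ∈ F, 2 ^ k * ediam s ≤ ediam Y := by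
  classical
  induction k generalizing Y with
  | zero => exact ⟨{Y}, by simp, by simp, by simp⟩
  | succ k ih =>
    obtain ⟨f, hcov, hdiam⟩ := h Y hY
    -- Intersecting with `A` keeps the pieces inside the set where doubling covers exist.
    choose F hFcard hFcov hFdiam using fun i => ih (Y := f i ∩ A) Set.inter_subset_right
    refine ⟨univ.biUnion F, ?_, ?_, ?_⟩
    · calc #(univ.biUnion F) ≤ ∑ i, #(F i) := card_biUnion_le
        _ ≤ ∑ _i : Fin m, m ^ k := sum_le_sum fun i _ => hFcard i
        _ = m ^ (k + 1) := by simp [pow_succ, mul_comm]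
    · intro y hy
      obtain ⟨i, hi⟩ := Set.mem_iUnion.1 (hcov hy)
      obtain ⟨s, hs, hys⟩ := Set.mem_sUnion.1 (hFcov i ⟨hi, hY hy⟩)
      exact Set.mem_sUnion.2 ⟨s, by simpa using ⟨i, hs⟩, hys⟩
    · intro s hs
      obtain ⟨i, -, hsi⟩ := mem_biUnion.1 hs
      calc 2 ^ (k + 1) * ediam s = 2 * (2 ^ k * ediam s) := by ring
        _ ≤ 2 * (ediam Y / 2) := by
          gcongr
          exact (hFdiam i s hsi).trans ((ediam_mono Set.inter_subset_left).trans (hdiam i))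
        _ = ediam Y := ENNReal.mul_div_cancel' (by norm_num) (by norm_num)

theorem sq_card_le_card_mul_card_edist_le {ι : Type*} (x : ι → E) {S : Finset ι}
    {F : Finset (Set E)} (hcov : ∀ i ∈ S, ∃ s ∈ F, x i ∈ s) {δ : ℝ≥0∞}
    (hF : ∀ s ∈ F, ediam s ≤ δ) :
    #S ^ 2 ≤ #F * #{p ∈ S ×ˢ S | edist (x p.1) (x p.2) ≤ δ} := by
  classical
  choose! g hgF hxg using hcov
  calc #S ^ 2 ≤ #F * #{p ∈ S ×ˢ S | g p.1 = g p.2} := sq_card_le_card_mul_card_filter_eq hgF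
    _ ≤ #F * #{p ∈ S ×ˢ S | edist (x p.1) (x p.2) ≤ δ} := by
      gcongr with p hp
      intro hg
      obtain ⟨h1, h2⟩ := mem_product.1 hp
      exact (edist_le_ediam_of_mem (hxg _ h1) (hg ▸ hxg _ h2)).trans (hF _ (hgF _ h1))

theorem HasDoublingCovers.sq_card_le {A : Set E} {m : ℕ} (h : HasDoublingCovers A m)
    {ι : Type*} (x : ι → E) {S : Finset ι} (hS : x '' S ⊆ A) {k : ℕ} {δ : ℝ≥0∞}
    (hdiam : ediam (x '' S) ≤ 2 ^ k * δ) :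
    #S ^ 2 ≤ m ^ k * #{p ∈ S ×ˢ S | edist (x p.1) (x p.2) ≤ δ} := by
  obtain ⟨F, hFcard, hFcov, hFdiam⟩ := h.exists_finset_cover k hS
  have hcov : ∀ i ∈ S, ∃ s ∈ F, x i ∈ s := fun i hi => by
    simpa using hFcov (Set.mem_image_of_mem x hi)
  have hsmall : ∀ s ∈ F, ediam s ≤ δ := fun s hs =>
    (ENNReal.mul_le_mul_iff_right (by positivity) (by simp)).1 ((hFdiam s hs).trans hdiam)
  exact (sq_card_le_card_mul_card_edist_le x hcov hsmall).trans (by gcongr)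

end Doubling

theorem doubling_near_count_upper_bound_general {d n : ℕ}
    (x₀ : EuclideanSpace ℝ (Fin d)) (x : Fin n → EuclideanSpace ℝ (Fin d))
    (β r : ℝ) (hβ : 0 < β) (hr : 0 < r) (d₀ : ℕ)
    (hdbl : ∀ Y : Set (EuclideanSpace ℝ (Fin d)), Y ⊆ insert x₀ (Set.range x) →
      ∃ f : Fin (2 ^ (d₀ + 1)) → Set (EuclideanSpace ℝ (Fin d)),
        Y ⊆ ⋃ i, f i ∧ ∀ i, EMetric.diam (f i) ≤ EMetric.diam Y / 2)
    (Nβ : ℕ)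
    (hNβ : Nβ = (Finset.univ.filter fun ij : Fin n × Fin n =>
        ij.1 < ij.2 ∧ dist (x ij.1) (x ij.2) ≤ β * r).card)
    (D : ℝ) (hD : 0 ≤ D) :
    ((Finset.univ.filter fun i : Fin n => dist (x i) x₀ ≤ D).card : ℝ) ≤
      (1 + 4 * D / (β * r)) ^ (((d₀ : ℝ) + 1) / 2) *
        Real.sqrt (2 * (Nβ : ℝ) + 2 * (n : ℝ)) := by
  have hβr : 0 < β * r := mul_pos hβ hr
  obtain ⟨k, hk, hk'⟩ := exists_two_pow_mem_Icc (a := 2 * D / (β * r)) (by positivity)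
  set S := univ.filter fun i : Fin n => dist (x i) x₀ ≤ D
  have hS : x '' S ⊆ insert x₀ (Set.range x) := by
    rintro _ ⟨i, -, rfl⟩
    exact Set.mem_insert_of_mem _ (Set.mem_range_self i)
  have hdiam : ediam (x '' S) ≤ 2 ^ k * ENNReal.ofReal (β * r) := calc
    ediam (x '' S) ≤ ENNReal.ofReal (2 * D) := by
      refine ediam_le_of_forall_dist_le ?_
      rintro _ ⟨i, hi, rfl⟩ _ ⟨j, hj, rfl⟩
      simp only [S, coe_filter, mem_univ, true_and, Set.mem_ofPred_eq] at hi hj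
      linarith [dist_triangle_right (x i) (x j) x₀]
    _ ≤ ENNReal.ofReal (2 ^ k * (β * r)) := ENNReal.ofReal_le_ofReal ((div_le_iff₀ hβr).1 hk)
    _ = 2 ^ k * ENNReal.ofReal (β * r) := by
      rw [ENNReal.ofReal_mul (by positivity), ENNReal.ofReal_pow zero_le_two, ENNReal.ofReal_ofNat]
  have hnear : #{p ∈ S ×ˢ S | edist (x p.1) (x p.2) ≤ ENNReal.ofReal (β * r)} ≤ 2 * Nβ + n := by
    refine (card_le_card fun p hp => ?_).trans (hNβ ▸ Fintype.card_fin n ▸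
      card_filter_le_two_mul_card_filter_lt_add ⟨fun i j h => (dist_comm (x j) (x i)).le.trans h⟩)
    simpa [edist_le_ofReal hβr.le] using (mem_filter.1 hp).2
  have hcount := HasDoublingCovers.sq_card_le hdbl x hS hdiam
  have hsq : (#S : ℝ) ^ 2 ≤ ((2 : ℝ) ^ k) ^ (d₀ + 1) * (2 * Nβ + 2 * n) := by
    rw [← pow_mul, mul_comm k, pow_mul]
    exact_mod_cast hcount.trans (by gcongr; omega)
  exact_mod_cast le_rpow_half_mul_sqrt_of_sq_le (A := 1 + 4 * D / (β * r)) (by positivity)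
    (hk'.trans_eq (by ring)) (by positivity) hsq

/-- Doubling-dimension counting bound: if `{x₀, x₁, …, xₙ}` has doubling dimension
at most `d₀ + 1` and `N_β` is the number of `βr`-near pairs among `x₁, …, xₙ`, then
for every `D ≥ 0` the number of points within distance `D` of `x₀` is at most
`(1 + 4D/(βr))^{(d₀+1)/2} · √(2N_β + 2n)`. -/
theorem doubling_near_count_upper_bound {d n : ℕ} (hn : 0 < n)
    (x₀ : EuclideanSpace ℝ (Fin d)) (x : Fin n → EuclideanSpace ℝ (Fin d))
    (β r : ℝ) (hβ : 0 < β) (hr : 0 < r) (d₀ : ℕ)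
    (hdbl : ∀ Y : Set (EuclideanSpace ℝ (Fin d)), Y ⊆ insert x₀ (Set.range x) →
      ∃ f : Fin (2 ^ (d₀ + 1)) → Set (EuclideanSpace ℝ (Fin d)),
        Y ⊆ ⋃ i, f i ∧ ∀ i, EMetric.diam (f i) ≤ EMetric.diam Y / 2)
    (Nβ : ℕ)
    (hNβ : Nβ = (Finset.univ.filter fun ij : Fin n × Fin n =>
        ij.1 < ij.2 ∧ dist (x ij.1) (x ij.2) ≤ β * r).card)
    (D : ℝ) (hD : 0 ≤ D) :
    ((Finset.univ.filter fun i : Fin n => dist (x i) x₀ ≤ D).card : ℝ) ≤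
      (1 + 4 * D / (β * r)) ^ (((d₀ : ℝ) + 1) / 2) *
        Real.sqrt (2 * (Nβ : ℝ) + 2 * (n : ℝ)) :=
  doubling_near_count_upper_bound_general x₀ x β r hβ hr d₀ hdbl Nβ hNβ D hD
end

section
/- Let x_0, x_1, …, x_n ∈ ℝ^d, let r > 0, α ≥ 1, η > 0, β > 0 and p ∈ (0,1), let ρ : [α, ∞) → (0, ∞) be a monotonically decreasing function, and let N_β = |{(i,j) : 1 ≤ i < j ≤ n, ‖x_i − x_j‖₂ ≤ βr}|. Suppose the finite set {x_0, x_1, …, x_n} (with the Euclidean metric) has doubling dimension at most d_0 + 1, i.e., every subset Y of it can be covered by at most 2^{d_0+1} subsets each of diameter at most half the diameter of Y. Then Σ_{i : ‖x_i − x_0‖₂ ≥ αr} p^{1/ρ(‖x_i − x_0‖₂ / r)} ≤ p^{1/ρ(α)} · (1 + 4(α+η)/β)^{(d_0+1)/2} · √(2N_β + 2n) + p^{1/ρ(α+η)} · n. -/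
/-!
Since `ρ` is decreasing, a point at distance in `[αr, (α+η)r)` from `x₀` contributes at most
`p^{1/ρ(α)}` and a farther one at most `p^{1/ρ(α+η)}`. The near points lie in a set of diameter
`2(α+η)r`; applying the doubling property `t` times, where `2(α+η)/β ≤ 2^t ≤ 1 + 4(α+η)/β`, colours
them with `2^{(d₀+1)t}` colours so that equally coloured points are `βr`-near. Cauchy–Schwarz then
bounds the number `m` of near points by `m² ≤ 2^{(d₀+1)t} (2N_β + m)`.
-/

open Finset

theorem exists_cover_ediam_le_div_two_pow {E : Type*} [PseudoEMetricSpace E] {K : ℕ} {X : Set E}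
    (hX : ∀ Y ⊆ X, ∃ f : Fin K → Set E,
      Y ⊆ ⋃ i, f i ∧ ∀ i, Metric.ediam (f i) ≤ Metric.ediam Y / 2)
    {Y : Set E} (hY : Y ⊆ X) (t : ℕ) :
    ∃ f : Fin (K ^ t) → Set E,
      Y ⊆ ⋃ i, f i ∧ ∀ i, Metric.ediam (f i) ≤ Metric.ediam Y / 2 ^ t := by
  induction t with
  | zero => exact ⟨fun _ => Y, Set.subset_iUnion_of_subset 0 le_rfl, by simp⟩
  | succ t ih =>
    obtain ⟨f, hcov, hdiam⟩ := ih
    choose g hgcov hgdiam using fun i => hX (f i ∩ Y) (Set.inter_subset_right.trans hY)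
    let e : Fin (K ^ (t + 1)) ≃ Fin (K ^ t) × Fin K :=
      (finCongr (pow_succ K t)).trans finProdFinEquiv.symm
    refine ⟨fun m => g (e m).1 (e m).2, fun y hy => ?_, fun m => ?_⟩
    · obtain ⟨_, ⟨i, rfl⟩, hyi⟩ := hcov hy
      obtain ⟨_, ⟨j, rfl⟩, hyj⟩ := hgcov i ⟨hyi, hy⟩
      exact Set.mem_iUnion.2 ⟨e.symm (i, j), by simpa using hyj⟩
    · calc Metric.ediam (g (e m).1 (e m).2) ≤ Metric.ediam (f (e m).1 ∩ Y) / 2 := hgdiam _ _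
        _ ≤ Metric.ediam Y / 2 ^ t / 2 := by
          gcongr
          exact (Metric.ediam_mono Set.inter_subset_left).trans (hdiam _)
        _ = Metric.ediam Y / 2 ^ (t + 1) := by
          rw [pow_succ, div_eq_mul_inv, div_eq_mul_inv, div_eq_mul_inv,
            ENNReal.mul_inv (by simp) (by simp), mul_assoc]

theorem sq_card_le_card_mul_card_monochromatic_pairs {ι κ : Type*} [Fintype κ] [DecidableEq κ]
    (S : Finset ι) (g : ι → κ) :
    #S ^ 2 ≤ Fintype.card κ * #{ij ∈ S ×ˢ S | g ij.1 = g ij.2} := by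
  have hfib : #S = ∑ k, #{i ∈ S | g i = k} :=
    card_eq_sum_card_fiberwise fun i _ => mem_univ (g i)
  have hpairs : #{ij ∈ S ×ˢ S | g ij.1 = g ij.2} = ∑ k, #{i ∈ S | g i = k} ^ 2 := by
    rw [card_eq_sum_card_fiberwise (f := fun ij => g ij.1) fun ij _ => mem_univ (g ij.1)]
    refine sum_congr rfl fun k _ => ?_
    rw [sq, ← card_product]
    congr 1
    ext ⟨i, j⟩
    simp only [mem_filter, mem_product]
    constructor
    · rintro ⟨⟨⟨hi, hj⟩, hij⟩, rfl⟩; exact ⟨⟨hi, rfl⟩, hj, hij.symm⟩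
    · rintro ⟨⟨hi, rfl⟩, hj, hji⟩; exact ⟨⟨⟨hi, hj⟩, hji.symm⟩, rfl⟩
  rw [hpairs, hfib]
  exact sq_sum_le_card_mul_sum_sq

theorem card_filter_product_le_of_symmetric {ι : Type*} [Fintype ι] [LinearOrder ι]
    {R : ι → ι → Prop} [DecidableRel R] (hR : ∀ i j, R i j → R j i) (S : Finset ι) :
    #{ij ∈ S ×ˢ S | R ij.1 ij.2} ≤ 2 * #{ij : ι × ι | ij.1 < ij.2 ∧ R ij.1 ij.2} + #S := by
  set P : Finset (ι × ι) := {ij | ij.1 < ij.2 ∧ R ij.1 ij.2}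
  have hsub : {ij ∈ S ×ˢ S | R ij.1 ij.2} ⊆ P ∪ P.image Prod.swap ∪ S.diag := by
    rintro ⟨i, j⟩ hij
    simp only [mem_filter, mem_product] at hij
    rcases lt_trichotomy i j with h | rfl | h
    · simp [P, h, hij.2]
    · simp [hij.1.1]
    · simp [P, h, hR _ _ hij.2]
  calc #{ij ∈ S ×ˢ S | R ij.1 ij.2} ≤ #(P ∪ P.image Prod.swap ∪ S.diag) := card_le_card hsub
    _ ≤ #P + #P + #S := by
      grw [card_union_le, card_union_le, card_image_le, diag_card]
    _ = 2 * #P + #S := by ring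

theorem antitoneOn_rpow_one_div {p α : ℝ} {ρ : ℝ → ℝ} (hp0 : 0 < p) (hp1 : p ≤ 1)
    (hρpos : ∀ s, α ≤ s → 0 < ρ s) (hρdec : AntitoneOn ρ (Set.Ici α)) :
    AntitoneOn (fun s => p ^ (1 / ρ s)) (Set.Ici α) := by
  intro a ha b hb hab
  exact Real.rpow_le_rpow_of_exponent_ge hp0 hp1
    (one_div_le_one_div_of_le (hρpos b hb) (hρdec ha hb hab))

theorem exists_two_pow_mem_Icc_s12 {c : ℝ} (hc : 0 ≤ c) :
    ∃ t : ℕ, c ≤ 2 ^ t ∧ (2 : ℝ) ^ t ≤ 1 + 2 * c := by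
  rcases le_or_gt c 1 with hc1 | hc1
  · exact ⟨0, by simpa using hc1, by simpa using hc⟩
  · obtain ⟨t, ht, ht'⟩ := exists_nat_pow_near hc1.le one_lt_two
    exact ⟨t + 1, ht'.le, by rw [pow_succ]; linarith⟩

theorem le_rpow_div_two_mul_sqrt {a b c : ℝ} {k : ℕ} (ha : 0 ≤ a) (hb : 0 ≤ b)
    (h : a ^ 2 ≤ b ^ k * c) : a ≤ b ^ ((k : ℝ) / 2) * √c := by
  have hbk : b ^ ((k : ℝ) / 2) = √(b ^ k) := by
    rw [Real.sqrt_eq_rpow, ← Real.rpow_natCast, ← Real.rpow_mul hb, mul_one_div]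
  rw [hbk, ← Real.sqrt_mul (by positivity), ← Real.sqrt_sq ha]
  exact Real.sqrt_le_sqrt h

theorem sq_card_le_of_doubling {E : Type*} [PseudoMetricSpace E] {K : ℕ} {X : Set E}
    (hX : ∀ Y ⊆ X, ∃ f : Fin K → Set E,
      Y ⊆ ⋃ i, f i ∧ ∀ i, Metric.ediam (f i) ≤ Metric.ediam Y / 2)
    {ι : Type*} [Fintype ι] [LinearOrder ι] (x : ι → E) {S : Finset ι} (hSX : ∀ i ∈ S, x i ∈ X)
    {δ : ℝ} (hδ : 0 ≤ δ) {t : ℕ} (hS : ∀ i ∈ S, ∀ j ∈ S, dist (x i) (x j) ≤ 2 ^ t * δ) :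
    #S ^ 2 ≤ K ^ t * (2 * #{ij : ι × ι | ij.1 < ij.2 ∧ dist (x ij.1) (x ij.2) ≤ δ} + #S) := by
  rcases S.eq_empty_or_nonempty with rfl | ⟨i₀, hi₀⟩
  · simp
  have hSX' : x '' S ⊆ X := by
    rintro _ ⟨i, hi, rfl⟩
    exact hSX i hi
  obtain ⟨f, hcov, hdiam⟩ := exists_cover_ediam_le_div_two_pow hX hSX' t
  have hpiece : ∀ k, Metric.ediam (f k) ≤ ENNReal.ofReal δ := by
    intro k
    refine (hdiam k).trans (ENNReal.div_le_of_le_mul' ?_)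
    refine Metric.ediam_le ?_
    rintro _ ⟨i, hi, rfl⟩ _ ⟨j, hj, rfl⟩
    rw [edist_dist, show (2 : ENNReal) ^ t = ENNReal.ofReal (2 ^ t) by simp,
      ← ENNReal.ofReal_mul (by positivity)]
    exact ENNReal.ofReal_le_ofReal (hS i hi j hj)
  have hcolor : ∀ i, ∃ k, i ∈ S → x i ∈ f k := by
    intro i
    by_cases hi : i ∈ S
    · obtain ⟨_, ⟨k, rfl⟩, hk⟩ := hcov ⟨i, hi, rfl⟩
      exact ⟨k, fun _ => hk⟩
    · obtain ⟨_, ⟨k, rfl⟩, -⟩ := hcov ⟨i₀, hi₀, rfl⟩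
      exact ⟨k, fun h => absurd h hi⟩
  choose g hg using hcolor
  have hclose : ∀ ij ∈ S ×ˢ S, g ij.1 = g ij.2 → dist (x ij.1) (x ij.2) ≤ δ := by
    rintro ⟨i, j⟩ hij hg_eq
    rw [mem_product] at hij
    have hj : x j ∈ f (g i) := hg_eq ▸ hg j hij.2
    rw [← ENNReal.ofReal_le_ofReal_iff hδ, ← edist_dist]
    exact (Metric.edist_le_ediam_of_mem (hg i hij.1) hj).trans (hpiece _)
  calc #S ^ 2 ≤ K ^ t * #{ij ∈ S ×ˢ S | g ij.1 = g ij.2} := by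
        simpa using sq_card_le_card_mul_card_monochromatic_pairs S g
    _ ≤ K ^ t * #{ij ∈ S ×ˢ S | dist (x ij.1) (x ij.2) ≤ δ} := by
        gcongr 1
        exact card_le_card (monotone_filter_right _ hclose)
    _ ≤ _ := by
        gcongr
        exact card_filter_product_le_of_symmetric (R := fun i j => dist (x i) (x j) ≤ δ)
          (fun i j h => by rwa [dist_comm]) S

theorem card_le_of_doubling {E : Type*} [PseudoMetricSpace E] {k : ℕ} {X : Set E}
    (hX : ∀ Y ⊆ X, ∃ f : Fin (2 ^ k) → Set E,
      Y ⊆ ⋃ i, f i ∧ ∀ i, Metric.ediam (f i) ≤ Metric.ediam Y / 2)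
    {ι : Type*} [Fintype ι] [LinearOrder ι] (x : ι → E) {S : Finset ι} (hSX : ∀ i ∈ S, x i ∈ X)
    (c : E) {R δ : ℝ} (hR : 0 ≤ R) (hδ : 0 < δ) (hSR : ∀ i ∈ S, dist (x i) c ≤ R) :
    (#S : ℝ) ≤ (1 + 4 * R / δ) ^ ((k : ℝ) / 2) *
      √(2 * #{ij : ι × ι | ij.1 < ij.2 ∧ dist (x ij.1) (x ij.2) ≤ δ} + 2 * Fintype.card ι) := by
  obtain ⟨t, ht, ht'⟩ := exists_two_pow_mem_Icc_s12 (c := 2 * R / δ) (by positivity)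
  rw [div_le_iff₀ hδ] at ht
  have hS_dist : ∀ i ∈ S, ∀ j ∈ S, dist (x i) (x j) ≤ 2 ^ t * δ := fun i hi j hj =>
    calc dist (x i) (x j) ≤ dist (x i) c + dist (x j) c := dist_triangle_right _ _ _
      _ ≤ 2 ^ t * δ := by linarith [hSR i hi, hSR j hj]
  have hcount := sq_card_le_of_doubling hX x hSX hδ.le hS_dist
  refine le_rpow_div_two_mul_sqrt (Nat.cast_nonneg _) (by positivity) ?_
  calc (#S : ℝ) ^ 2 ≤ ((2 : ℝ) ^ t) ^ k *
        (2 * #{ij : ι × ι | ij.1 < ij.2 ∧ dist (x ij.1) (x ij.2) ≤ δ} + #S) := by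
        rw [← pow_mul, mul_comm t, pow_mul]
        exact_mod_cast hcount
    _ ≤ _ := by
        gcongr
        · linarith [show 2 * (2 * R / δ) = 4 * R / δ by ring]
        · linarith [show (#S : ℝ) ≤ Fintype.card ι by exact_mod_cast card_le_univ S]

/-- Doubling-dimension version of Lemma 3: if `{x₀, x₁, …, xₙ}` has doubling
dimension at most `d₀ + 1`, then for a decreasing positive exponent `ρ` on `[α,∞)`
and `p ∈ (0,1)`,
`Σ_{i : ‖x_i − x₀‖ ≥ αr} p^{1/ρ(‖x_i − x₀‖/r)}
  ≤ p^{1/ρ(α)} (1 + 4(α+η)/β)^{(d₀+1)/2} √(2N_β + 2n) + p^{1/ρ(α+η)} n`. -/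
theorem doubling_lsh_sum_bound {d n : ℕ}
    (x₀ : EuclideanSpace ℝ (Fin d)) (x : Fin n → EuclideanSpace ℝ (Fin d))
    (r α η β p : ℝ) (hr : 0 < r) (hα : 1 ≤ α) (hη : 0 < η) (hβ : 0 < β)
    (hp0 : 0 < p) (hp1 : p < 1)
    (ρ : ℝ → ℝ) (hρpos : ∀ s, α ≤ s → 0 < ρ s) (hρdec : AntitoneOn ρ (Set.Ici α))
    (d₀ : ℕ)
    (hdbl : ∀ Y : Set (EuclideanSpace ℝ (Fin d)), Y ⊆ insert x₀ (Set.range x) →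
      ∃ f : Fin (2 ^ (d₀ + 1)) → Set (EuclideanSpace ℝ (Fin d)),
        Y ⊆ ⋃ i, f i ∧ ∀ i, EMetric.diam (f i) ≤ EMetric.diam Y / 2)
    (Nβ : ℕ)
    (hNβ : Nβ = (Finset.univ.filter fun ij : Fin n × Fin n =>
        ij.1 < ij.2 ∧ dist (x ij.1) (x ij.2) ≤ β * r).card) :
    ∑ i ∈ Finset.univ.filter fun i : Fin n => α * r ≤ dist (x i) x₀,
        p ^ ((1 : ℝ) / ρ (dist (x i) x₀ / r)) ≤
      p ^ ((1 : ℝ) / ρ α) * (1 + 4 * (α + η) / β) ^ (((d₀ : ℝ) + 1) / 2) *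
          Real.sqrt (2 * (Nβ : ℝ) + 2 * (n : ℝ)) +
        p ^ ((1 : ℝ) / ρ (α + η)) * (n : ℝ) := by
  set A : Finset (Fin n) := Finset.univ.filter fun i => α * r ≤ dist (x i) x₀
  set S := A.filter fun i => dist (x i) x₀ < (α + η) * r
  set F := A.filter fun i => ¬dist (x i) x₀ < (α + η) * r
  have hS := card_le_of_doubling hdbl x (S := S)
    (fun i _ => Set.mem_insert_of_mem _ (Set.mem_range_self i)) x₀ (R := (α + η) * r) (δ := β * r)
    (by positivity) (by positivity) fun i hi => (mem_filter.1 hi).2.le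
  rw [← hNβ, Fintype.card_fin, ← mul_assoc, mul_div_mul_right _ _ hr.ne'] at hS
  push_cast at hS
  have hF : (#F : ℝ) ≤ n := by exact_mod_cast (card_le_univ F).trans_eq (Fintype.card_fin n)
  have hmono := antitoneOn_rpow_one_div hp0 hp1.le hρpos hρdec
  have hnear : ∀ i ∈ S, p ^ ((1 : ℝ) / ρ (dist (x i) x₀ / r)) ≤ p ^ ((1 : ℝ) / ρ α) := by
    intro i hi
    have hαi : α ≤ dist (x i) x₀ / r := (le_div_iff₀ hr).2 (mem_filter.1 (mem_filter.1 hi).1).2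
    exact hmono Set.self_mem_Ici hαi hαi
  have hfar : ∀ i ∈ F, p ^ ((1 : ℝ) / ρ (dist (x i) x₀ / r)) ≤ p ^ ((1 : ℝ) / ρ (α + η)) := by
    intro i hi
    have hαηi : α + η ≤ dist (x i) x₀ / r := (le_div_iff₀ hr).2 (not_lt.1 (mem_filter.1 hi).2)
    exact hmono (Set.mem_Ici.2 (by linarith)) (Set.mem_Ici.2 (by linarith)) hαηi
  calc ∑ i ∈ A, p ^ ((1 : ℝ) / ρ (dist (x i) x₀ / r))
      = ∑ i ∈ S, p ^ ((1 : ℝ) / ρ (dist (x i) x₀ / r)) +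
        ∑ i ∈ F, p ^ ((1 : ℝ) / ρ (dist (x i) x₀ / r)) := (sum_filter_add_sum_filter_not _ _ _).symm
    _ ≤ #S • p ^ ((1 : ℝ) / ρ α) + #F • p ^ ((1 : ℝ) / ρ (α + η)) :=
      add_le_add (sum_le_card_nsmul _ _ _ hnear) (sum_le_card_nsmul _ _ _ hfar)
    _ ≤ _ := by
      rw [nsmul_eq_mul, nsmul_eq_mul, mul_comm (#S : ℝ), mul_comm (#F : ℝ), mul_assoc]
      gcongr
end
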